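/- Let α1, α2, β2 be nonzero real constants. For a smooth function τ : ℝ → ℝ define the vector field X(τ) on ℝ⁶ with coordinates (t,x,y,u,v,w) by X(τ) = τ ∂t + (τ'/2)(x ∂x + y ∂y − u ∂u − v ∂v − 2w ∂w) + Φ(v ∂u − u ∂v) + (Φ_t/β2) ∂w, where Φ(t,x,y) = −(x²/(8α1) + y²/(8α2)) τ''(t) and Φ_t = −(x²/(8α1) + y²/(8α2)) τ'''(t). Then for all smooth τ1, τ2 : ℝ → ℝ, the Lie bracket of vector fields satisfies [X(τ1), X(τ2)] = X(τ1 τ2' − τ2 τ1'). -/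

import Mathlib

noncomputable section

/-- ℝ⁶ with coordinates (t,x,y,u,v,w). -/
abbrev E6 : Type := ℝ × ℝ × ℝ × ℝ × ℝ × ℝ

/-- The Lie bracket of two smooth vector fields on ℝ⁶:
[V,W](p) = DW(p)·V(p) − DV(p)·W(p). -/
def lieBracket (V W : E6 → E6) : E6 → E6 :=
  fun p => fderiv ℝ W p (V p) - fderiv ℝ V p (W p)

/-- The time-reparametrization symmetry generator X(τ) of the constant-coefficient
Davey–Stewartson system (coefficients p₁ = α₁, p₂ = α₂, q₂ = β₂, real form ψ = u+iv):
X(τ) = τ∂t + (τ'/2)(x∂x + y∂y − u∂u − v∂v − 2w∂w) + Φ(v∂u − u∂v) + (Φ_t/β₂)∂w,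
where Φ = −(x²/(8α₁) + y²/(8α₂))τ''. -/
def Xgen (α1 α2 β2 : ℝ) (τ : ℝ → ℝ) : E6 → E6 := fun p =>
  ( τ p.1,
    (deriv τ p.1 / 2) * p.2.1,
    (deriv τ p.1 / 2) * p.2.2.1,
    -(deriv τ p.1 / 2) * p.2.2.2.1
      + (-(p.2.1^2 / (8*α1) + p.2.2.1^2 / (8*α2)) * deriv (deriv τ) p.1) * p.2.2.2.2.1,
    -(-(p.2.1^2 / (8*α1) + p.2.2.1^2 / (8*α2)) * deriv (deriv τ) p.1) * p.2.2.2.1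
      - (deriv τ p.1 / 2) * p.2.2.2.2.1,
    -(deriv τ p.1) * p.2.2.2.2.2
      + (-(p.2.1^2 / (8*α1) + p.2.2.1^2 / (8*α2)) * deriv (deriv (deriv τ)) p.1) / β2 )

/-- The symmetry generator
Y(g) = g∂x − (xg'/(2α₁))(v∂u − u∂v) − (xg''/(2β₂α₁))∂w. -/
def Ygen (α1 β2 : ℝ) (g : ℝ → ℝ) : E6 → E6 := fun p =>
  ( 0,
    g p.1,
    0,
    -(p.2.1 * deriv g p.1 / (2*α1)) * p.2.2.2.2.1,
    (p.2.1 * deriv g p.1 / (2*α1)) * p.2.2.2.1,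
    -(p.2.1 * deriv (deriv g) p.1 / (2*β2*α1)) )

/-- The symmetry generator W(m) = m(v∂u − u∂v) + (m'/β₂)∂w. -/
def Wgen (β2 : ℝ) (m : ℝ → ℝ) : E6 → E6 := fun p =>
  ( 0, 0, 0,
    m p.1 * p.2.2.2.2.1,
    -(m p.1) * p.2.2.2.1,
    deriv m p.1 / β2 )

/-!
Everything is an explicit computation with jets. The Jacobian of `X(τ)` at `(t, x, y, u, v, w)`
involves only `τ, τ', τ'', τ'''` and `τ''''` at `t`, so each component of `[X(τ₁), X(τ₂)]` is a
polynomial in the jets of `τ₁` and `τ₂`. On the other side, the Wronskian `W(f, g) = f g' - g f'`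
obeys the Leibniz rule `W(f, g)' = W(f', g) + W(f, g')`, which expresses `W'`, `W''` and `W'''`
through the same jets, and the two sides agree as polynomials in these jets.
-/

theorem ContDiff.hasDerivAt_deriv {f : ℝ → ℝ} (hf : ContDiff ℝ 1 f) (t : ℝ) :
    HasDerivAt f (deriv f t) t :=
  (hf.differentiable one_ne_zero t).hasDerivAt

def wronskian (f g : ℝ → ℝ) : ℝ → ℝ := fun t => f t * deriv g t - g t * deriv f t

section Wronskian

variable {f g : ℝ → ℝ}

theorem hasDerivAt_wronskian (hf : ContDiff ℝ 2 f) (hg : ContDiff ℝ 2 g) (t : ℝ) :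
    HasDerivAt (wronskian f g) (wronskian (deriv f) g t + wronskian f (deriv g) t) t := by
  have hw := ((hf.of_le one_le_two).hasDerivAt_deriv t).fun_mul (hg.deriv'.hasDerivAt_deriv t)
    |>.fun_sub (((hg.of_le one_le_two).hasDerivAt_deriv t).fun_mul (hf.deriv'.hasDerivAt_deriv t))
  refine hw.congr_deriv ?_
  simp only [wronskian]
  ring

theorem deriv_wronskian (hf : ContDiff ℝ 2 f) (hg : ContDiff ℝ 2 g) :
    deriv (wronskian f g) = wronskian (deriv f) g + wronskian f (deriv g) :=
  funext fun t => (hasDerivAt_wronskian hf hg t).deriv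

theorem deriv_deriv_wronskian (hf : ContDiff ℝ 3 f) (hg : ContDiff ℝ 3 g) :
    deriv (deriv (wronskian f g)) =
      wronskian (deriv (deriv f)) g + 2 • wronskian (deriv f) (deriv g)
        + wronskian f (deriv (deriv g)) := by
  rw [deriv_wronskian (hf.of_le (by norm_num)) (hg.of_le (by norm_num))]
  funext t
  rw [((hasDerivAt_wronskian hf.deriv' (hg.of_le (by norm_num)) t).add
    (hasDerivAt_wronskian (hf.of_le (by norm_num)) hg.deriv' t)).deriv]
  simp only [Pi.add_apply, Pi.smul_apply]
  ring

theorem deriv_deriv_deriv_wronskian (hf : ContDiff ℝ 4 f) (hg : ContDiff ℝ 4 g) :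
    deriv (deriv (deriv (wronskian f g))) =
      wronskian (deriv (deriv (deriv f))) g + 3 • wronskian (deriv (deriv f)) (deriv g)
        + 3 • wronskian (deriv f) (deriv (deriv g)) + wronskian f (deriv (deriv (deriv g))) := by
  have hf1 : ContDiff ℝ 3 (deriv f) := hf.deriv'
  have hg1 : ContDiff ℝ 3 (deriv g) := hg.deriv'
  rw [deriv_deriv_wronskian (hf.of_le (by norm_num)) (hg.of_le (by norm_num))]
  funext t
  rw [(((hasDerivAt_wronskian hf1.deriv' (hg.of_le (by norm_num)) t).add
    ((hasDerivAt_wronskian (hf1.of_le (by norm_num)) (hg1.of_le (by norm_num)) t).const_smul 2)).add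
    (hasDerivAt_wronskian (hf.of_le (by norm_num)) hg1.deriv' t)).deriv]
  simp only [Pi.add_apply, Pi.smul_apply]
  ring

end Wronskian

section Generator

variable (α1 α2 β2 : ℝ) {τ : ℝ → ℝ}

theorem Xgen_apply (t x y u v w : ℝ) :
    Xgen α1 α2 β2 τ (t, x, y, u, v, w) =
      (τ t, deriv τ t / 2 * x, deriv τ t / 2 * y,
        -(deriv τ t / 2) * u - (x ^ 2 / (8 * α1) + y ^ 2 / (8 * α2)) * deriv (deriv τ) t * v,
        (x ^ 2 / (8 * α1) + y ^ 2 / (8 * α2)) * deriv (deriv τ) t * u - deriv τ t / 2 * v,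
        -deriv τ t * w - (x ^ 2 / (8 * α1) + y ^ 2 / (8 * α2)) * deriv (deriv (deriv τ)) t / β2) := by
  simp only [Xgen, Prod.mk.injEq, true_and]
  exact ⟨by ring, by ring, by ring⟩

theorem fderiv_Xgen_apply (hτ : ContDiff ℝ 4 τ) (t x y u v w δt δx δy δu δv δw : ℝ) :
    fderiv ℝ (Xgen α1 α2 β2 τ) (t, x, y, u, v, w) (δt, δx, δy, δu, δv, δw) =
      (deriv τ t * δt,
        deriv (deriv τ) t / 2 * x * δt + deriv τ t / 2 * δx,
        deriv (deriv τ) t / 2 * y * δt + deriv τ t / 2 * δy,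
        -(deriv (deriv τ) t / 2 * u
            + (x ^ 2 / (8 * α1) + y ^ 2 / (8 * α2)) * deriv (deriv (deriv τ)) t * v) * δt
          - (x / (4 * α1) * δx + y / (4 * α2) * δy) * deriv (deriv τ) t * v
          - deriv τ t / 2 * δu - (x ^ 2 / (8 * α1) + y ^ 2 / (8 * α2)) * deriv (deriv τ) t * δv,
        ((x ^ 2 / (8 * α1) + y ^ 2 / (8 * α2)) * deriv (deriv (deriv τ)) t * u
            - deriv (deriv τ) t / 2 * v) * δt
          + (x / (4 * α1) * δx + y / (4 * α2) * δy) * deriv (deriv τ) t * u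
          + (x ^ 2 / (8 * α1) + y ^ 2 / (8 * α2)) * deriv (deriv τ) t * δu - deriv τ t / 2 * δv,
        -(deriv (deriv τ) t * w
            + (x ^ 2 / (8 * α1) + y ^ 2 / (8 * α2)) * deriv (deriv (deriv (deriv τ))) t / β2) * δt
          - (x / (4 * α1) * δx + y / (4 * α2) * δy) * deriv (deriv (deriv τ)) t / β2
          - deriv τ t * δw) := by
  set p : E6 := (t, x, y, u, v, w)
  have h1 : ContDiff ℝ 3 (deriv τ) := hτ.deriv'
  have h2 : ContDiff ℝ 2 (deriv (deriv τ)) := h1.deriv'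
  have h3 : ContDiff ℝ 1 (deriv (deriv (deriv τ))) := h2.deriv'
  have ht : HasFDerivAt (𝕜 := ℝ) (fun q : E6 => q.1) _ p := hasFDerivAt_fst
  have hx : HasFDerivAt (𝕜 := ℝ) (fun q : E6 => q.2.1) _ p := hasFDerivAt_snd.fst
  have hy : HasFDerivAt (𝕜 := ℝ) (fun q : E6 => q.2.2.1) _ p := hasFDerivAt_snd.snd.fst
  have hu : HasFDerivAt (𝕜 := ℝ) (fun q : E6 => q.2.2.2.1) _ p := hasFDerivAt_snd.snd.snd.fst
  have hv : HasFDerivAt (𝕜 := ℝ) (fun q : E6 => q.2.2.2.2.1) _ p :=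
    hasFDerivAt_snd.snd.snd.snd.fst
  have hw : HasFDerivAt (𝕜 := ℝ) (fun q : E6 => q.2.2.2.2.2) _ p :=
    hasFDerivAt_snd.snd.snd.snd.snd
  have hr := (((hx.pow 2).mul_const (8 * α1)⁻¹).add ((hy.pow 2).mul_const (8 * α2)⁻¹)).neg
  have d0 := ((hτ.of_le (by norm_num)).hasDerivAt_deriv t).comp_hasFDerivAt p ht
  have d1 := ((h1.of_le (by norm_num)).hasDerivAt_deriv t).comp_hasFDerivAt p ht
  have d2 := ((h2.of_le (by norm_num)).hasDerivAt_deriv t).comp_hasFDerivAt p ht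
  have d3 := (h3.hasDerivAt_deriv t).comp_hasFDerivAt p ht
  have hX : HasFDerivAt (Xgen α1 α2 β2 τ) _ p :=
    d0.prodMk (((d1.mul_const 2⁻¹).mul hx).prodMk (((d1.mul_const 2⁻¹).mul hy).prodMk
      (((d1.mul_const 2⁻¹).neg.mul hu |>.add ((hr.mul d2).mul hv)).prodMk
      (((hr.mul d2).neg.mul hu |>.sub ((d1.mul_const 2⁻¹).mul hv)).prodMk
      (d1.neg.mul hw |>.add ((hr.mul d3).mul_const β2⁻¹))))))
  rw [hX.fderiv]
  simp only [ContinuousLinearMap.prod_apply, add_apply, sub_apply, neg_apply, smul_apply,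
    ContinuousLinearMap.comp_apply, ContinuousLinearMap.coe_fst', ContinuousLinearMap.coe_snd',
    smul_eq_mul, Function.comp_apply, Pi.neg_apply, Pi.mul_apply, Pi.add_apply, nsmul_eq_mul,
    Nat.add_one_sub_one, pow_one, Prod.mk.injEq, true_and, p]
  refine ⟨?_, ?_, ?_, ?_, ?_⟩ <;> ring

theorem lieBracket_Xgen {τ1 τ2 : ℝ → ℝ} (hτ1 : ContDiff ℝ 4 τ1) (hτ2 : ContDiff ℝ 4 τ2) :
    lieBracket (Xgen α1 α2 β2 τ1) (Xgen α1 α2 β2 τ2) = Xgen α1 α2 β2 (wronskian τ1 τ2) := by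
  funext ⟨t, x, y, u, v, w⟩
  simp only [lieBracket, Xgen_apply, fderiv_Xgen_apply _ _ _ hτ1, fderiv_Xgen_apply _ _ _ hτ2]
  rw [deriv_deriv_deriv_wronskian hτ1 hτ2, deriv_deriv_wronskian (hτ1.of_le (by norm_num))
    (hτ2.of_le (by norm_num)), deriv_wronskian (hτ1.of_le (by norm_num)) (hτ2.of_le (by norm_num))]
  simp only [wronskian, Pi.add_apply, Pi.smul_apply, Prod.mk_sub_mk, Prod.mk.injEq]
  refine ⟨?_, ?_, ?_, ?_, ?_, ?_⟩ <;> ring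

end Generator

theorem virasoro_commutation
    (α1 α2 β2 : ℝ)
    (τ1 τ2 : ℝ → ℝ)
    (hτ1 : ContDiff ℝ (⊤ : ℕ∞) τ1) (hτ2 : ContDiff ℝ (⊤ : ℕ∞) τ2) :
    lieBracket (Xgen α1 α2 β2 τ1) (Xgen α1 α2 β2 τ2)
      = Xgen α1 α2 β2 (fun t => τ1 t * deriv τ2 t - τ2 t * deriv τ1 t) :=
  lieBracket_Xgen α1 α2 β2 (contDiff_infty.mp hτ1 4) (contDiff_infty.mp hτ2 4)
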